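/- arXiv:2511.00306 — 3 statements merged into one kernel-verified Lean document; each statement's English description precedes it below -/
import Mathlib

section
/- Let P be a positive definite real n×n matrix, R a positive definite real m×m matrix, H a real m×n matrix, K := P Hᵀ (H P Hᵀ + R)⁻¹ the Kalman gain, and P⁺ := (P⁻¹ + Hᵀ R⁻¹ H)⁻¹. Then for all vectors x⁻ ∈ ℝⁿ and y ∈ ℝᵐ, the MAP solution of the factor-graph update equals the Kalman filter update: P⁺ · (P⁻¹ x⁻ + Hᵀ R⁻¹ y) = x⁻ + K · (y − H x⁻). -/
open Matrix

/-- The MAP solution `P⁺ (P⁻¹ x⁻ + Hᵀ R⁻¹ y)` of the factor-graph update equals the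
Kalman filter update `x⁻ + K (y − H x⁻)`. -/
theorem map_update_eq_kalman_update {n m : ℕ}
    (P : Matrix (Fin n) (Fin n) ℝ) (R : Matrix (Fin m) (Fin m) ℝ)
    (H : Matrix (Fin m) (Fin n) ℝ) (hP : P.PosDef) (hR : R.PosDef)
    (K : Matrix (Fin n) (Fin m) ℝ) (hK : K = P * Hᵀ * (H * P * Hᵀ + R)⁻¹)
    (Pplus : Matrix (Fin n) (Fin n) ℝ) (hPplus : Pplus = (P⁻¹ + Hᵀ * R⁻¹ * H)⁻¹)
    (xm : Fin n → ℝ) (y : Fin m → ℝ) :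
    Pplus *ᵥ (P⁻¹ *ᵥ xm + Hᵀ *ᵥ (R⁻¹ *ᵥ y)) = xm + K *ᵥ (y - H *ᵥ xm) := by
  have hPinv : (P⁻¹).PosDef := hP.inv
  have hRinv : (R⁻¹).PosDef := hR.inv
  have hHRH : (Hᵀ * R⁻¹ * H).PosSemidef := by
    simpa using hRinv.posSemidef.conjTranspose_mul_mul_same H
  have hHPH : (H * P * Hᵀ).PosSemidef := by
    simpa using hP.posSemidef.mul_mul_conjTranspose_same H
  have hA : (P⁻¹ + Hᵀ * R⁻¹ * H).PosDef := hPinv.add_posSemidef hHRH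
  have hS : (H * P * Hᵀ + R).PosDef := Matrix.PosDef.posSemidef_add hHPH hR
  set A := P⁻¹ + Hᵀ * R⁻¹ * H with hAdef
  set S := H * P * Hᵀ + R with hSdef
  have hAu : IsUnit A.det := isUnit_iff_isUnit_det _ |>.1 hA.isUnit
  have hSu : IsUnit S.det := isUnit_iff_isUnit_det _ |>.1 hS.isUnit
  have hPu : IsUnit P.det := isUnit_iff_isUnit_det _ |>.1 hP.isUnit
  have hRu : IsUnit R.det := isUnit_iff_isUnit_det _ |>.1 hR.isUnit
  -- key identity: A * (P * Hᵀ) = Hᵀ * R⁻¹ * S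
  have key : A * (P * Hᵀ) = Hᵀ * R⁻¹ * S := by
    rw [hAdef, hSdef]
    have h1 : P⁻¹ * (P * Hᵀ) = Hᵀ := by
      rw [← Matrix.mul_assoc, Matrix.nonsing_inv_mul _ hPu, Matrix.one_mul]
    have h2 : Hᵀ * R⁻¹ * R = Hᵀ := by
      rw [Matrix.mul_assoc, Matrix.nonsing_inv_mul _ hRu, Matrix.mul_one]
    rw [Matrix.add_mul, Matrix.mul_add, h1, h2]
    rw [add_comm, Matrix.mul_assoc (Hᵀ * R⁻¹) H, ← Matrix.mul_assoc H P Hᵀ]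
  -- K = A⁻¹ * (Hᵀ * R⁻¹)
  have hK2 : K = A⁻¹ * (Hᵀ * R⁻¹) := by
    have := congrArg (fun M => A⁻¹ * M * S⁻¹) key
    rw [← Matrix.mul_assoc A⁻¹ A, Matrix.nonsing_inv_mul _ hAu, Matrix.one_mul] at this
    rw [hK, this, Matrix.mul_assoc A⁻¹ (Hᵀ * R⁻¹ * S) S⁻¹,
      Matrix.mul_assoc (Hᵀ * R⁻¹) S S⁻¹, Matrix.mul_nonsing_inv _ hSu, Matrix.mul_one]
  -- Pplus * P⁻¹ = 1 - K * H
  have hKH : Pplus * P⁻¹ = 1 - K * H := by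
    rw [hPplus, hK2]
    have h3 : P⁻¹ = A - Hᵀ * R⁻¹ * H := (add_sub_cancel_right _ _).symm
    rw [h3, Matrix.mul_sub, Matrix.nonsing_inv_mul _ hAu]
    simp [Matrix.mul_assoc]
  have hKform : Pplus * (Hᵀ * R⁻¹) = K := by rw [hPplus, ← hK2]
  -- conclude on vectors
  have lhs : Pplus *ᵥ (P⁻¹ *ᵥ xm + Hᵀ *ᵥ (R⁻¹ *ᵥ y)) =
      (Pplus * P⁻¹) *ᵥ xm + (Pplus * (Hᵀ * R⁻¹)) *ᵥ y := by
    rw [Matrix.mulVec_add, Matrix.mulVec_mulVec, Matrix.mulVec_mulVec, Matrix.mulVec_mulVec,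
      Matrix.mul_assoc]
  rw [lhs, hKH, hKform, Matrix.sub_mulVec, Matrix.one_mulVec, Matrix.mulVec_sub,
    ← Matrix.mulVec_mulVec]
  abel
end

section
/- Let P be a positive definite real n×n matrix, R a positive definite real m×m matrix, H a real m×n matrix, x⁻ ∈ ℝⁿ, z ∈ ℝᵐ, and define the update cost f(x) := (z − H x)ᵀ R⁻¹ (z − H x) + (x − x⁻)ᵀ P⁻¹ (x − x⁻). Let K := P Hᵀ (H P Hᵀ + R)⁻¹ and x⁺ := x⁻ + K (z − H x⁻). Then x⁺ is the unique global minimizer of f: for every x ∈ ℝⁿ with x ≠ x⁺, f(x) > f(x⁺). -/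
/-!
The cost `f` is a convex quadratic, so `x⁺` minimizes it as soon as the gradient vanishes there,
i.e. `Hᵀ R⁻¹ (z − H x⁺) = P⁻¹ (x⁺ − x⁻)`. Writing `S = H P Hᵀ + R`, the residual of the update is
`z − H x⁺ = (1 − H K)(z − H x⁻) = R S⁻¹ (z − H x⁻)`, and `Hᵀ R⁻¹ R S⁻¹ = Hᵀ S⁻¹ = P⁻¹ K`, which is
the stationarity condition. Completing the square then gives
`f (x⁺ + d) = f x⁺ + (H d)ᵀ R⁻¹ (H d) + dᵀ P⁻¹ d`, where the added form is positive definite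
because `P⁻¹` is.
-/

open Matrix

variable {α ι κ : Type*} [CommRing α] [Fintype ι] [Fintype κ]

theorem Matrix.dotProduct_mulVec_comm_of_isSymm {Q : Matrix ι ι α} (hQ : Q.IsSymm) (u v : ι → α) :
    u ⬝ᵥ (Q *ᵥ v) = v ⬝ᵥ (Q *ᵥ u) := by
  rw [dotProduct_mulVec, ← mulVec_transpose, hQ.eq, dotProduct_comm]

theorem Matrix.add_dotProduct_mulVec_add_of_isSymm {Q : Matrix ι ι α} (hQ : Q.IsSymm)
    (u v : ι → α) :
    (u + v) ⬝ᵥ (Q *ᵥ (u + v)) = u ⬝ᵥ (Q *ᵥ u) + 2 * (v ⬝ᵥ (Q *ᵥ u)) + v ⬝ᵥ (Q *ᵥ v) := by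
  simp only [mulVec_add, dotProduct_add, add_dotProduct, dotProduct_mulVec_comm_of_isSymm hQ u v]
  ring

def mapCost (A : Matrix κ κ α) (B : Matrix ι ι α) (H : Matrix κ ι α) (xm : ι → α) (z : κ → α)
    (x : ι → α) : α :=
  (z - H *ᵥ x) ⬝ᵥ (A *ᵥ (z - H *ᵥ x)) + (x - xm) ⬝ᵥ (B *ᵥ (x - xm))

theorem mapCost_add {A : Matrix κ κ α} {B : Matrix ι ι α} (hA : A.IsSymm) (hB : B.IsSymm)
    (H : Matrix κ ι α) (xm : ι → α) (z : κ → α) {y : ι → α}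
    (hy : Hᵀ *ᵥ (A *ᵥ (z - H *ᵥ y)) = B *ᵥ (y - xm)) (d : ι → α) :
    mapCost A B H xm z (y + d) =
      mapCost A B H xm z y + ((H *ᵥ d) ⬝ᵥ (A *ᵥ (H *ᵥ d)) + d ⬝ᵥ (B *ᵥ d)) := by
  have hres : z - H *ᵥ (y + d) = (z - H *ᵥ y) + -(H *ᵥ d) := by rw [mulVec_add]; abel
  have hinn : y + d - xm = (y - xm) + d := by abel
  have hcross : (H *ᵥ d) ⬝ᵥ (A *ᵥ (z - H *ᵥ y)) = d ⬝ᵥ (B *ᵥ (y - xm)) := by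
    rw [← hy, dotProduct_mulVec d, vecMul_transpose]
  simp only [mapCost, hres, hinn, add_dotProduct_mulVec_add_of_isSymm hA,
    add_dotProduct_mulVec_add_of_isSymm hB, mulVec_neg, dotProduct_neg, neg_dotProduct, neg_neg,
    hcross]
  ring

section Kalman

variable [DecidableEq κ]

noncomputable def kalmanGain (P : Matrix ι ι α) (R : Matrix κ κ α) (H : Matrix κ ι α) :
    Matrix ι κ α :=
  P * Hᵀ * (H * P * Hᵀ + R)⁻¹

noncomputable def kalmanUpdate (P : Matrix ι ι α) (R : Matrix κ κ α) (H : Matrix κ ι α)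
    (xm : ι → α) (z : κ → α) : ι → α :=
  xm + kalmanGain P R H *ᵥ (z - H *ᵥ xm)

theorem one_sub_mul_kalmanGain (P : Matrix ι ι α) {R : Matrix κ κ α} (H : Matrix κ ι α)
    (hS : IsUnit (H * P * Hᵀ + R).det) :
    1 - H * kalmanGain P R H = R * (H * P * Hᵀ + R)⁻¹ := by
  calc 1 - H * kalmanGain P R H = (H * P * Hᵀ + R - H * P * Hᵀ) * (H * P * Hᵀ + R)⁻¹ := by
        rw [sub_mul, mul_nonsing_inv _ hS, kalmanGain]
        simp only [Matrix.mul_assoc]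
    _ = R * (H * P * Hᵀ + R)⁻¹ := by rw [add_sub_cancel_left]

variable [DecidableEq ι]

theorem transpose_mul_inv_mul_one_sub_mul_kalmanGain {P : Matrix ι ι α} {R : Matrix κ κ α}
    (H : Matrix κ ι α) (hP : IsUnit P.det) (hR : IsUnit R.det)
    (hS : IsUnit (H * P * Hᵀ + R).det) :
    Hᵀ * R⁻¹ * (1 - H * kalmanGain P R H) = P⁻¹ * kalmanGain P R H := by
  rw [one_sub_mul_kalmanGain P H hS, kalmanGain, Matrix.mul_assoc, ← Matrix.mul_assoc R⁻¹,
    nonsing_inv_mul _ hR, Matrix.one_mul, Matrix.mul_assoc P, nonsing_inv_mul_cancel_left _ _ hP]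

theorem kalmanUpdate_stationary {P : Matrix ι ι α} {R : Matrix κ κ α} (H : Matrix κ ι α)
    (hP : IsUnit P.det) (hR : IsUnit R.det) (hS : IsUnit (H * P * Hᵀ + R).det)
    (xm : ι → α) (z : κ → α) :
    Hᵀ *ᵥ (R⁻¹ *ᵥ (z - H *ᵥ kalmanUpdate P R H xm z)) =
      P⁻¹ *ᵥ (kalmanUpdate P R H xm z - xm) := by
  have hres : z - H *ᵥ kalmanUpdate P R H xm z =
      (1 - H * kalmanGain P R H) *ᵥ (z - H *ᵥ xm) := by
    rw [kalmanUpdate, sub_mulVec, one_mulVec, mulVec_add, mulVec_mulVec]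
    abel
  rw [hres, kalmanUpdate, add_sub_cancel_left, mulVec_mulVec, mulVec_mulVec, mulVec_mulVec,
    transpose_mul_inv_mul_one_sub_mul_kalmanGain H hP hR hS]

end Kalman

/-- The Kalman filter update `x⁺ = x⁻ + K (z − H x⁻)` with gain
`K = P Hᵀ (H P Hᵀ + R)⁻¹` is the unique global minimizer of the MAP update cost
`f(x) = (z − H x)ᵀ R⁻¹ (z − H x) + (x − x⁻)ᵀ P⁻¹ (x − x⁻)`. -/
theorem kalman_update_is_unique_MAP_minimizer {n m : ℕ}
    (P : Matrix (Fin n) (Fin n) ℝ) (R : Matrix (Fin m) (Fin m) ℝ)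
    (H : Matrix (Fin m) (Fin n) ℝ) (hP : P.PosDef) (hR : R.PosDef)
    (xm : Fin n → ℝ) (z : Fin m → ℝ)
    (f : (Fin n → ℝ) → ℝ)
    (hf : f = fun x => (z - H *ᵥ x) ⬝ᵥ (R⁻¹ *ᵥ (z - H *ᵥ x))
      + (x - xm) ⬝ᵥ (P⁻¹ *ᵥ (x - xm)))
    (K : Matrix (Fin n) (Fin m) ℝ) (hK : K = P * Hᵀ * (H * P * Hᵀ + R)⁻¹)
    (xp : Fin n → ℝ) (hxp : xp = xm + K *ᵥ (z - H *ᵥ xm)) :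
    ∀ x : Fin n → ℝ, x ≠ xp → f x > f xp := by
  have hS : (H * P * Hᵀ + R).PosDef := by
    simpa using PosDef.posSemidef_add (hP.posSemidef.mul_mul_conjTranspose_same H) hR
  have hstat := kalmanUpdate_stationary H hP.det_pos.ne'.isUnit hR.det_pos.ne'.isUnit
    hS.det_pos.ne'.isUnit xm z
  have hxp' : xp = kalmanUpdate P R H xm z := by rw [hxp, hK]; rfl
  have hf' : f = mapCost R⁻¹ P⁻¹ H xm z := hf
  intro x hx
  obtain ⟨d, rfl⟩ : ∃ d, x = xp + d := ⟨x - xp, by abel⟩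
  have hd : d ≠ 0 := by simpa using hx
  have hRinv : R⁻¹.IsSymm :=
    (conjTranspose_eq_transpose_of_trivial R⁻¹).symm.trans hR.inv.isHermitian.eq
  have hPinv : P⁻¹.IsSymm :=
    (conjTranspose_eq_transpose_of_trivial P⁻¹).symm.trans hP.inv.isHermitian.eq
  subst hxp'
  rw [hf', gt_iff_lt, mapCost_add hRinv hPinv H xm z hstat d, lt_add_iff_pos_right]
  exact add_pos_of_nonneg_of_pos
    (by simpa using hR.inv.posSemidef.dotProduct_mulVec_nonneg (H *ᵥ d))
    (by simpa using hP.inv.dotProduct_mulVec_pos hd)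
end

section
/- Let Q be a positive definite real n×n matrix, P a positive definite real m×m matrix, F a real n×m matrix, and fix vectors x̂ ∈ ℝᵐ, ν ∈ ℝⁿ, and x₂ ∈ ℝⁿ. Define c(x₁) := (x₂ − F x₁ − ν)ᵀ Q⁻¹ (x₂ − F x₁ − ν) + (x₁ − x̂)ᵀ P⁻¹ (x₁ − x̂) and let d := x₂ − F x̂ − ν. Then for every x₁ ∈ ℝᵐ, c(x₁) ≥ dᵀ (Q + F P Fᵀ)⁻¹ d, and equality holds for x₁* := x̂ + (P⁻¹ + Fᵀ Q⁻¹ F)⁻¹ Fᵀ Q⁻¹ d. -/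
open Matrix

/-!
With `u = x₁ - x̂` the residual is `d - F u`, and completing the square in `u` gives
`c(x₁) = (u - w)ᵀ S (u - w) + dᵀ Q⁻¹ d - wᵀ S w` with information matrix `S = P⁻¹ + Fᵀ Q⁻¹ F`
and `S w = Fᵀ Q⁻¹ d`. Since `S` is positive definite the first term is nonnegative and vanishes
exactly at `u = w`, and by the Woodbury identity the constant term is `dᵀ (Q + F P Fᵀ)⁻¹ d`.
-/

namespace Matrix

variable {ι κ R : Type*} [Fintype ι] [CommRing R]

theorem IsSymm.dotProduct_mulVec_comm {A : Matrix ι ι R} (hA : A.IsSymm) (x y : ι → R) :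
    x ⬝ᵥ (A *ᵥ y) = y ⬝ᵥ (A *ᵥ x) := by
  rw [dotProduct_mulVec, ← mulVec_transpose, hA.eq, dotProduct_comm]

theorem IsSymm.transpose_mul_mul {A : Matrix ι ι R} (hA : A.IsSymm) (F : Matrix ι κ R) :
    (Fᵀ * A * F).IsSymm := by
  rw [IsSymm, transpose_mul, transpose_mul, hA.eq, transpose_transpose, Matrix.mul_assoc]

variable [Fintype κ]

theorem mulVec_dotProduct_eq_dotProduct_transpose_mulVec (F : Matrix ι κ R) (u : κ → R)
    (z : ι → R) : (F *ᵥ u) ⬝ᵥ z = u ⬝ᵥ (Fᵀ *ᵥ z) := by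
  rw [dotProduct_comm, dotProduct_mulVec, ← mulVec_transpose, dotProduct_comm]

theorem IsSymm.dotProduct_sub_mulVec_sub {S : Matrix κ κ R} (hS : S.IsSymm) {v w : κ → R}
    (hw : S *ᵥ w = v) (u : κ → R) :
    (u - w) ⬝ᵥ (S *ᵥ (u - w)) = u ⬝ᵥ (S *ᵥ u) - 2 * (u ⬝ᵥ v) + w ⬝ᵥ v := by
  rw [mulVec_sub, dotProduct_sub, sub_dotProduct, sub_dotProduct, hS.dotProduct_mulVec_comm w u,
    hw]
  ring

theorem IsSymm.dotProduct_sub_mulVec_mulVec_sub {A : Matrix ι ι R} (hA : A.IsSymm)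
    (F : Matrix ι κ R) (d : ι → R) (u : κ → R) :
    (d - F *ᵥ u) ⬝ᵥ (A *ᵥ (d - F *ᵥ u)) =
      d ⬝ᵥ (A *ᵥ d) - 2 * (u ⬝ᵥ (Fᵀ *ᵥ (A *ᵥ d))) + u ⬝ᵥ ((Fᵀ * A * F) *ᵥ u) := by
  rw [mulVec_sub, dotProduct_sub, sub_dotProduct, sub_dotProduct,
    hA.dotProduct_mulVec_comm d (F *ᵥ u)]
  simp only [mulVec_dotProduct_eq_dotProduct_transpose_mulVec, ← mulVec_mulVec]
  ring

/-- Completing the square of a linear least-squares cost with a quadratic prior. -/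
theorem dotProduct_sub_mulVec_add_dotProduct_mulVec_eq {A : Matrix ι ι R} {B : Matrix κ κ R}
    (hA : A.IsSymm) (hB : B.IsSymm) (F : Matrix ι κ R) (d : ι → R) {w : κ → R}
    (hw : (B + Fᵀ * A * F) *ᵥ w = Fᵀ *ᵥ (A *ᵥ d)) (u : κ → R) :
    (d - F *ᵥ u) ⬝ᵥ (A *ᵥ (d - F *ᵥ u)) + u ⬝ᵥ (B *ᵥ u) =
      (u - w) ⬝ᵥ ((B + Fᵀ * A * F) *ᵥ (u - w)) + (d ⬝ᵥ (A *ᵥ d) - w ⬝ᵥ (Fᵀ *ᵥ (A *ᵥ d))) := by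
  rw [(hB.add (hA.transpose_mul_mul F)).dotProduct_sub_mulVec_sub hw,
    hA.dotProduct_sub_mulVec_mulVec_sub, add_mulVec, dotProduct_add]
  ring

variable [DecidableEq ι] [DecidableEq κ]

theorem dotProduct_add_mul_mul_transpose_inv_mulVec {Q : Matrix ι ι R} {P : Matrix κ κ R}
    (hQ : IsUnit Q) (hQs : Q.IsSymm) (hP : IsUnit P) {F : Matrix ι κ R}
    (hS : IsUnit (P⁻¹ + Fᵀ * Q⁻¹ * F)) (d : ι → R) :
    d ⬝ᵥ ((Q + F * P * Fᵀ)⁻¹ *ᵥ d) =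
      d ⬝ᵥ (Q⁻¹ *ᵥ d) - ((P⁻¹ + Fᵀ * Q⁻¹ * F)⁻¹ *ᵥ (Fᵀ *ᵥ (Q⁻¹ *ᵥ d))) ⬝ᵥ
        (Fᵀ *ᵥ (Q⁻¹ *ᵥ d)) := by
  rw [add_mul_mul_inv_eq_sub Q F P Fᵀ hQ hP hS, sub_mulVec, dotProduct_sub]
  simp only [← mulVec_mulVec]
  rw [hQs.inv.dotProduct_mulVec_comm d (F *ᵥ _), mulVec_dotProduct_eq_dotProduct_transpose_mulVec]

theorem dotProduct_sub_mulVec_add_dotProduct_inv_mulVec_eq {Q : Matrix ι ι R}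
    {P : Matrix κ κ R} (hQ : IsUnit Q) (hQs : Q.IsSymm) (hP : IsUnit P) (hPs : P.IsSymm)
    {F : Matrix ι κ R} (hS : IsUnit (P⁻¹ + Fᵀ * Q⁻¹ * F)) (d : ι → R) (u : κ → R) :
    (d - F *ᵥ u) ⬝ᵥ (Q⁻¹ *ᵥ (d - F *ᵥ u)) + u ⬝ᵥ (P⁻¹ *ᵥ u) =
      (u - (P⁻¹ + Fᵀ * Q⁻¹ * F)⁻¹ *ᵥ (Fᵀ *ᵥ (Q⁻¹ *ᵥ d))) ⬝ᵥ
          ((P⁻¹ + Fᵀ * Q⁻¹ * F) *ᵥ (u - (P⁻¹ + Fᵀ * Q⁻¹ * F)⁻¹ *ᵥ (Fᵀ *ᵥ (Q⁻¹ *ᵥ d)))) +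
        d ⬝ᵥ ((Q + F * P * Fᵀ)⁻¹ *ᵥ d) := by
  have hw : (P⁻¹ + Fᵀ * Q⁻¹ * F) *ᵥ ((P⁻¹ + Fᵀ * Q⁻¹ * F)⁻¹ *ᵥ (Fᵀ *ᵥ (Q⁻¹ *ᵥ d))) =
      Fᵀ *ᵥ (Q⁻¹ *ᵥ d) := by
    rw [mulVec_mulVec, mul_nonsing_inv _ ((isUnit_iff_isUnit_det _).1 hS), one_mulVec]
  rw [dotProduct_sub_mulVec_add_dotProduct_mulVec_eq hQs.inv hPs.inv F d hw,
    dotProduct_add_mul_mul_transpose_inv_mulVec hQ hQs hP hS]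

end Matrix

theorem Matrix.PosDef.inv_add_transpose_mul_inv_mul {n m : Type*} [Fintype n] [Fintype m]
    [DecidableEq n] [DecidableEq m] {Q : Matrix n n ℝ} {P : Matrix m m ℝ} (hQ : Q.PosDef)
    (hP : P.PosDef) (F : Matrix n m ℝ) : (P⁻¹ + Fᵀ * Q⁻¹ * F).PosDef :=
  hP.inv.add_posSemidef (by simpa using hQ.inv.posSemidef.conjTranspose_mul_mul_same F)

/-- Marginalizing the previous state out of the joint prediction cost yields the
predicted quadratic prior: `c(x₁) ≥ dᵀ (Q + F P Fᵀ)⁻¹ d` with equality at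
`x₁* = x̂ + (P⁻¹ + Fᵀ Q⁻¹ F)⁻¹ Fᵀ Q⁻¹ d`. -/
theorem prediction_marginalization {n m : ℕ}
    (Q : Matrix (Fin n) (Fin n) ℝ) (P : Matrix (Fin m) (Fin m) ℝ)
    (F : Matrix (Fin n) (Fin m) ℝ) (hQ : Q.PosDef) (hP : P.PosDef)
    (xhat : Fin m → ℝ) (ν : Fin n → ℝ) (x₂ : Fin n → ℝ)
    (c : (Fin m → ℝ) → ℝ)
    (hc : c = fun x₁ => (x₂ - F *ᵥ x₁ - ν) ⬝ᵥ (Q⁻¹ *ᵥ (x₂ - F *ᵥ x₁ - ν))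
      + (x₁ - xhat) ⬝ᵥ (P⁻¹ *ᵥ (x₁ - xhat)))
    (d : Fin n → ℝ) (hd : d = x₂ - F *ᵥ xhat - ν) :
    (∀ x₁ : Fin m → ℝ, c x₁ ≥ d ⬝ᵥ ((Q + F * P * Fᵀ)⁻¹ *ᵥ d)) ∧
    c (xhat + (P⁻¹ + Fᵀ * Q⁻¹ * F)⁻¹ *ᵥ (Fᵀ *ᵥ (Q⁻¹ *ᵥ d)))
      = d ⬝ᵥ ((Q + F * P * Fᵀ)⁻¹ *ᵥ d) := by
  have hS := hQ.inv_add_transpose_mul_inv_mul hP F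
  have hc_shift : ∀ x₁, c x₁ = (d - F *ᵥ (x₁ - xhat)) ⬝ᵥ (Q⁻¹ *ᵥ (d - F *ᵥ (x₁ - xhat))) +
      (x₁ - xhat) ⬝ᵥ (P⁻¹ *ᵥ (x₁ - xhat)) := fun x₁ => by
    rw [hc, hd, mulVec_sub]
    abel_nf
  simp only [hc_shift, dotProduct_sub_mulVec_add_dotProduct_inv_mulVec_eq hQ.isUnit
    (isHermitian_iff_isSymm.1 hQ.isHermitian) hP.isUnit (isHermitian_iff_isSymm.1 hP.isHermitian)
    hS.isUnit]
  refine ⟨fun x₁ => le_add_of_nonneg_left (hS.posSemidef.dotProduct_mulVec_nonneg _), ?_⟩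
  simp
end
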